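/- Let ξ(λ) be the unique positive solution of ξ = (1+λ)(1-e^{-ξ}) for λ > 0. Then λ ↦ ξ(λ) - λ is nonnegative and increasing on (0,∞). -/

import Mathlib

/-!
Solving the defining equation for `λ` gives `1 + λ = ξ / (1 - e^{-ξ})`, hence
`ξ - λ = 1 - ξ / (e^ξ - 1)`. Both `ξ / (1 - e^{-ξ})` and `ξ / (e^ξ - 1)` are reciprocals of
secant slopes of `exp` through `0` (at `-ξ` and at `ξ`), which increase by convexity. So `ξ` is
increasing in `λ`, and `ξ - λ` increases with `ξ`; nonnegativity is `ξ ≤ e^ξ - 1`.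
-/

open Real Set

lemma exp_sub_one_div_lt_exp_sub_one_div {x y : ℝ} (hx : x ≠ 0) (hy : y ≠ 0) (hxy : x < y) :
    (exp x - 1) / x < (exp y - 1) / y := by
  simpa using strictConvexOn_exp.secant_strict_mono (mem_univ 0) (mem_univ x) (mem_univ y)
    hx hy hxy

lemma div_exp_sub_one_le_one {x : ℝ} (hx : 0 ≤ x) : x / (exp x - 1) ≤ 1 :=
  div_le_one_of_le₀ (by linarith [add_one_le_exp x]) (sub_nonneg.2 (one_le_exp hx))

lemma one_sub_exp_neg_pos {x : ℝ} (hx : 0 < x) : 0 < 1 - exp (-x) :=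
  sub_pos.2 (exp_lt_one_iff.2 (neg_neg_of_pos hx))

lemma strictAntiOn_div_exp_sub_one : StrictAntiOn (fun x => x / (exp x - 1)) (Ioi 0) := by
  intro x hx y hy hxy
  have hslope_pos : 0 < (exp x - 1) / x := div_pos (sub_pos.2 (one_lt_exp_iff.2 hx)) hx
  simpa only [one_div_div] using one_div_lt_one_div_of_lt hslope_pos
    (exp_sub_one_div_lt_exp_sub_one_div (ne_of_gt hx) (ne_of_gt hy) hxy)

lemma strictMonoOn_div_one_sub_exp_neg : StrictMonoOn (fun x => x / (1 - exp (-x))) (Ioi 0) := by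
  intro x hx y hy hxy
  have hslope_neg : ∀ t : ℝ, (exp (-t) - 1) / -t = (1 - exp (-t)) / t := fun t => by
    rw [div_neg, ← neg_div, neg_sub]
  have hslope_pos : 0 < (1 - exp (-y)) / y := div_pos (one_sub_exp_neg_pos hy) hy
  have h := exp_sub_one_div_lt_exp_sub_one_div (neg_ne_zero.2 (ne_of_gt hy))
    (neg_ne_zero.2 (ne_of_gt hx)) (neg_lt_neg hxy)
  rw [hslope_neg, hslope_neg] at h
  simpa only [one_div_div] using one_div_lt_one_div_of_lt hslope_pos h

lemma div_one_sub_exp_neg_eq_add_div_exp_sub_one {x : ℝ} (hx : x ≠ 0) :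
    x / (1 - exp (-x)) = x + x / (exp x - 1) := by
  have h : exp x - 1 ≠ 0 := sub_ne_zero.2 (by simpa using hx)
  have h' : 1 - exp (-x) ≠ 0 := by rwa [Ne, sub_eq_zero, eq_comm, exp_eq_one_iff, neg_eq_zero]
  rw [exp_neg] at h' ⊢
  field_simp
  ring

theorem xi_sub_lam_mono (xi : ℝ → ℝ)
    (hxi : ∀ lam : ℝ, 0 < lam →
      0 < xi lam ∧ xi lam = (1 + lam) * (1 - Real.exp (-(xi lam)))) :
    (∀ lam : ℝ, 0 < lam → 0 ≤ xi lam - lam) ∧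
    StrictMonoOn (fun lam => xi lam - lam) (Set.Ioi (0 : ℝ)) := by
  have hlam : ∀ lam, 0 < lam → 1 + lam = xi lam / (1 - exp (-xi lam)) := fun lam h =>
    eq_div_of_mul_eq (one_sub_exp_neg_pos (hxi lam h).1).ne' (hxi lam h).2.symm
  have hsub : ∀ lam, 0 < lam → xi lam - lam = 1 - xi lam / (exp (xi lam) - 1) := fun lam h => by
    linarith [hlam lam h, div_one_sub_exp_neg_eq_add_div_exp_sub_one (hxi lam h).1.ne']
  have hmono : StrictMonoOn xi (Ioi 0) := fun a ha b hb hab =>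
    (strictMonoOn_div_one_sub_exp_neg.lt_iff_lt (hxi a ha).1 (hxi b hb).1).1 <| by
      rw [← hlam a ha, ← hlam b hb]; linarith
  refine ⟨fun lam h => ?_, fun a ha b hb hab => ?_⟩
  · rw [hsub lam h, sub_nonneg]
    exact div_exp_sub_one_le_one (hxi lam h).1.le
  · show xi a - a < xi b - b
    rw [hsub a ha, hsub b hb]
    exact sub_lt_sub_left
      (strictAntiOn_div_exp_sub_one (hxi a ha).1 (hxi b hb).1 (hmono ha hb hab)) 1
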